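/- Let α ∈ (0,1) and let D be a directed graph on 2n vertices that is not α-extremal. Then for all A, B ⊆ V(D) with (1 − α/2)n ≤ |A|, |B| ≤ (1 + α/2)n, we have e⃗(A, B) ≥ (α²/2)·n². -/
import Mathlib


/-- The number of directed edges from `A` to `B`. -/
noncomputable def dirEdges {V : Type*} (E : V → V → Prop) (A B : Set V) : ℕ :=
  {p : V × V | p.1 ∈ A ∧ p.2 ∈ B ∧ E p.1 p.2}.ncard

/-- A digraph on `N` vertices is `α`-extremal if there are `A, B ⊆ V` with
`(1-α)N/2 ≤ |A|,|B| ≤ (1+α)N/2` such that every vertex of `A` has at most `αN/2`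
out-neighbours in `B` and every vertex of `B` has at most `αN/2` in-neighbours in `A`. -/
def AlphaExtremal (α : ℝ) {V : Type*} (E : V → V → Prop) : Prop :=
  ∃ A B : Set V,
    (1 - α) * (Nat.card V : ℝ) / 2 ≤ (A.ncard : ℝ) ∧
    (A.ncard : ℝ) ≤ (1 + α) * (Nat.card V : ℝ) / 2 ∧
    (1 - α) * (Nat.card V : ℝ) / 2 ≤ (B.ncard : ℝ) ∧
    (B.ncard : ℝ) ≤ (1 + α) * (Nat.card V : ℝ) / 2 ∧
    (∀ a ∈ A, ({b ∈ B | E a b}.ncard : ℝ) ≤ α * (Nat.card V : ℝ) / 2) ∧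
    (∀ b ∈ B, ({a ∈ A | E a b}.ncard : ℝ) ≤ α * (Nat.card V : ℝ) / 2)

set_option maxHeartbeats 1000000 in
theorem statement5 (α : ℝ) (hα : 0 < α ∧ α < 1) (n : ℕ)
    (V : Type) (E : V → V → Prop)
    (hcard : Nat.card V = 2 * n) (hloop : ∀ v, ¬ E v v)
    (hnonext : ¬ AlphaExtremal α E) :
    ∀ A B : Set V,
      (1 - α / 2) * n ≤ (A.ncard : ℝ) → (A.ncard : ℝ) ≤ (1 + α / 2) * n →
      (1 - α / 2) * n ≤ (B.ncard : ℝ) → (B.ncard : ℝ) ≤ (1 + α / 2) * n →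
      α ^ 2 / 2 * (n : ℝ) ^ 2 ≤ (dirEdges E A B : ℝ) := by
  obtain ⟨hα0, hα1⟩ := hα
  intro A B hA1 hA2 hB1 hB2
  rcases Nat.eq_zero_or_pos n with hn | hn
  · subst hn; simp
  by_contra hlt
  push_neg at hlt
  haveI : Finite V := Nat.finite_of_card_ne_zero (by omega)
  classical
  set AF : Finset V := A.toFinite.toFinset with hAF
  set BF : Finset V := B.toFinite.toFinset with hBF
  have hAcard : A.ncard = AF.card := Set.ncard_eq_toFinset_card A A.toFinite
  have hBcard : B.ncard = BF.card := Set.ncard_eq_toFinset_card B B.toFinite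
  -- the edge count as a double sum
  have hset : (Set.toFinite {p : V × V | p.1 ∈ A ∧ p.2 ∈ B ∧ E p.1 p.2}).toFinset
      = (AF ×ˢ BF).filter (fun p => E p.1 p.2) := by
    ext p
    simp [hAF, hBF, Set.Finite.mem_toFinset, Finset.mem_product, and_assoc]
  have hE0 : dirEdges E A B
      = ((AF ×ˢ BF).filter (fun p => E p.1 p.2)).card := by
    rw [dirEdges, Set.ncard_eq_toFinset_card _ (Set.toFinite _), hset]
  have hEsumA : (dirEdges E A B : ℕ) = ∑ a ∈ AF, (BF.filter (fun b => E a b)).card := by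
    rw [hE0, Finset.card_filter, Finset.sum_product]
    exact Finset.sum_congr rfl fun a _ => (Finset.card_filter _ _).symm
  have hEsumB : (dirEdges E A B : ℕ) = ∑ b ∈ BF, (AF.filter (fun a => E a b)).card := by
    rw [hE0, Finset.card_filter, Finset.sum_product, Finset.sum_comm]
    exact Finset.sum_congr rfl fun b _ => (Finset.card_filter _ _).symm
  have hnpos : (0 : ℝ) < n := by exact_mod_cast hn
  have htpos : (0 : ℝ) < α * n := by positivity
  -- bad vertices
  set badA : Finset V := AF.filter (fun a => α * n < ((BF.filter (fun b => E a b)).card : ℝ))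
    with hbadA
  set badB : Finset V := BF.filter (fun b => α * n < ((AF.filter (fun a => E a b)).card : ℝ))
    with hbadB
  have hbadAcard : (badA.card : ℝ) < α * n / 2 := by
    have h1 : (badA.card : ℝ) * (α * n) ≤ ∑ a ∈ AF, ((BF.filter (fun b => E a b)).card : ℝ) := by
      calc (badA.card : ℝ) * (α * n) = ∑ _a ∈ badA, (α * n) := by
            rw [Finset.sum_const, nsmul_eq_mul]
        _ ≤ ∑ a ∈ badA, ((BF.filter (fun b => E a b)).card : ℝ) := by
            apply Finset.sum_le_sum
            intro a ha
            exact le_of_lt (Finset.mem_filter.mp ha).2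
        _ ≤ ∑ a ∈ AF, ((BF.filter (fun b => E a b)).card : ℝ) := by
            apply Finset.sum_le_sum_of_subset_of_nonneg (Finset.filter_subset _ _)
            intros; positivity
    have h2 : ∑ a ∈ AF, ((BF.filter (fun b => E a b)).card : ℝ) = (dirEdges E A B : ℝ) := by
      rw [hEsumA]; push_cast; ring
    have h3 : (badA.card : ℝ) * (α * n) < α ^ 2 / 2 * n ^ 2 := lt_of_le_of_lt (h1.trans h2.le) hlt
    nlinarith
  have hbadBcard : (badB.card : ℝ) < α * n / 2 := by
    have h1 : (badB.card : ℝ) * (α * n) ≤ ∑ b ∈ BF, ((AF.filter (fun a => E a b)).card : ℝ) := by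
      calc (badB.card : ℝ) * (α * n) = ∑ _b ∈ badB, (α * n) := by
            rw [Finset.sum_const, nsmul_eq_mul]
        _ ≤ ∑ b ∈ badB, ((AF.filter (fun a => E a b)).card : ℝ) := by
            apply Finset.sum_le_sum
            intro b hb
            exact le_of_lt (Finset.mem_filter.mp hb).2
        _ ≤ ∑ b ∈ BF, ((AF.filter (fun a => E a b)).card : ℝ) := by
            apply Finset.sum_le_sum_of_subset_of_nonneg (Finset.filter_subset _ _)
            intros; positivity
    have h2 : ∑ b ∈ BF, ((AF.filter (fun a => E a b)).card : ℝ) = (dirEdges E A B : ℝ) := by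
      rw [hEsumB]; push_cast; ring
    have h3 : (badB.card : ℝ) * (α * n) < α ^ 2 / 2 * n ^ 2 := lt_of_le_of_lt (h1.trans h2.le) hlt
    nlinarith
  -- good sets
  set A' : Finset V := AF \ badA with hA'
  set B' : Finset V := BF \ badB with hB'
  have hA'card : (AF.card : ℝ) - badA.card ≤ A'.card := by
    have := Finset.le_card_sdiff badA AF
    have h2 : AF.card - badA.card ≤ A'.card := by
      rw [hA', Finset.card_sdiff_of_subset (Finset.filter_subset _ _)]
    have h3 : badA.card ≤ AF.card := Finset.card_le_card (Finset.filter_subset _ _)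
    have : (AF.card - badA.card : ℕ) = (AF.card : ℝ) - badA.card := by
      push_cast [Nat.cast_sub h3]; ring
    rw [← this]; exact_mod_cast h2
  have hB'card : (BF.card : ℝ) - badB.card ≤ B'.card := by
    have h2 : BF.card - badB.card ≤ B'.card := by
      rw [hB', Finset.card_sdiff_of_subset (Finset.filter_subset _ _)]
    have h3 : badB.card ≤ BF.card := Finset.card_le_card (Finset.filter_subset _ _)
    have : (BF.card - badB.card : ℕ) = (BF.card : ℝ) - badB.card := by
      push_cast [Nat.cast_sub h3]; ring
    rw [← this]; exact_mod_cast h2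
  apply hnonext
  refine ⟨(A' : Set V), (B' : Set V), ?_, ?_, ?_, ?_, ?_, ?_⟩
  · rw [Set.ncard_coe_finset, hcard]
    push_cast
    have : (AF.card : ℝ) ≥ (1 - α / 2) * n := by rw [← hAcard]; exact hA1
    linarith [hA'card, hbadAcard]
  · rw [Set.ncard_coe_finset, hcard]
    have h1 : (A'.card : ℝ) ≤ AF.card := by
      exact_mod_cast Finset.card_le_card (Finset.sdiff_subset)
    have : (AF.card : ℝ) ≤ (1 + α / 2) * n := by rw [← hAcard]; exact hA2
    have hαn : (0:ℝ) ≤ α * n := htpos.le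
    push_cast
    linarith
  · rw [Set.ncard_coe_finset, hcard]
    push_cast
    have : (BF.card : ℝ) ≥ (1 - α / 2) * n := by rw [← hBcard]; exact hB1
    linarith [hB'card, hbadBcard]
  · rw [Set.ncard_coe_finset, hcard]
    have h1 : (B'.card : ℝ) ≤ BF.card := by
      exact_mod_cast Finset.card_le_card (Finset.sdiff_subset)
    have : (BF.card : ℝ) ≤ (1 + α / 2) * n := by rw [← hBcard]; exact hB2
    have hαn : (0:ℝ) ≤ α * n := htpos.le
    push_cast
    linarith
  · intro a ha
    rw [hcard]
    have ha' : a ∈ A' := ha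
    have haA : a ∈ AF := (Finset.mem_sdiff.mp ha').1
    have hgood : ¬ (α * n < ((BF.filter (fun b => E a b)).card : ℝ)) := by
      have := (Finset.mem_sdiff.mp ha').2
      intro hc
      exact this (Finset.mem_filter.mpr ⟨haA, hc⟩)
    push_neg at hgood
    have hsub : {b ∈ (B' : Set V) | E a b} ⊆ ↑(BF.filter (fun b => E a b)) := by
      intro b hb
      obtain ⟨hb1, hb2⟩ := hb
      have : b ∈ B' := hb1
      exact Finset.mem_coe.mpr (Finset.mem_filter.mpr ⟨(Finset.mem_sdiff.mp this).1, hb2⟩)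
    have hle : ({b ∈ (B' : Set V) | E a b}.ncard : ℝ) ≤ ((BF.filter (fun b => E a b)).card : ℝ) := by
      have := Set.ncard_le_ncard hsub (Set.toFinite _)
      rw [Set.ncard_coe_finset] at this
      exact_mod_cast this
    push_cast
    calc ({b ∈ (B' : Set V) | E a b}.ncard : ℝ) ≤ _ := hle
      _ ≤ α * n := hgood
      _ ≤ α * (2 * n) / 2 := by ring_nf; linarith [le_refl (α * n)]
  · intro b hb
    rw [hcard]
    have hb' : b ∈ B' := hb
    have hbB : b ∈ BF := (Finset.mem_sdiff.mp hb').1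
    have hgood : ¬ (α * n < ((AF.filter (fun a => E a b)).card : ℝ)) := by
      have := (Finset.mem_sdiff.mp hb').2
      intro hc
      exact this (Finset.mem_filter.mpr ⟨hbB, hc⟩)
    push_neg at hgood
    have hsub : {a ∈ (A' : Set V) | E a b} ⊆ ↑(AF.filter (fun a => E a b)) := by
      intro a ha
      obtain ⟨ha1, ha2⟩ := ha
      have : a ∈ A' := ha1
      exact Finset.mem_coe.mpr (Finset.mem_filter.mpr ⟨(Finset.mem_sdiff.mp this).1, ha2⟩)
    have hle : ({a ∈ (A' : Set V) | E a b}.ncard : ℝ) ≤ ((AF.filter (fun a => E a b)).card : ℝ) := by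
      have := Set.ncard_le_ncard hsub (Set.toFinite _)
      rw [Set.ncard_coe_finset] at this
      exact_mod_cast this
    push_cast
    calc ({a ∈ (A' : Set V) | E a b}.ncard : ℝ) ≤ _ := hle
      _ ≤ α * n := hgood
      _ ≤ α * (2 * n) / 2 := by ring_nf; linarith [le_refl (α * n)]
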